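/- Let x be a bounded random vector in ℝ^d with E[xxᵀ] = C, and let Ĉ = (1/n)∑_{i=1}^n x_i x_iᵀ where x_1,...,x_n are i.i.d. copies of x. Then for any fixed λ > 0, E[d_λ(Ĉ)] ≤ 2 d_λ(C). -/

import Mathlib

/-!
Writing `L = λI`, the identity `d_λ(A) = dim - λ tr (A + L)⁻¹` and operator antitonicity of the
inverse make `d_λ` monotone, so for positive semidefinite `A`, `B`
`d_λ(A) ≤ d_λ(A + B) = tr (A (A + B + L)⁻¹) + tr (B (A + B + L)⁻¹) ≤ tr (A (B + L)⁻¹) + d_λ(B)`.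
With `A = Ĉ` and `B = C` the right-hand side is affine in `Ĉ`, and `E Ĉ = C`, so taking
expectations gives `E d_λ(Ĉ) ≤ 2 d_λ(C)`.
-/

open Matrix MeasureTheory ProbabilityTheory

namespace Matrix

section EffectiveDimension

variable {m : Type*} [Fintype m] [DecidableEq m]

theorem PosSemidef.trace_mul_nonneg {A B : Matrix m m ℝ} (hA : A.PosSemidef)
    (hB : B.PosSemidef) : 0 ≤ (A * B).trace := by
  obtain ⟨S, rfl⟩ : ∃ S : Matrix m m ℝ, A = Sᵀ * S := by
    open MatrixOrder in
    obtain ⟨S, hS⟩ := CStarAlgebra.nonneg_iff_eq_star_mul_self.mp hA.nonneg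
    exact ⟨S, by rw [hS, star_eq_conjTranspose, conjTranspose_eq_transpose_of_trivial]⟩
  rw [Matrix.mul_assoc, trace_mul_comm, ← conjTranspose_eq_transpose_of_trivial]
  exact (hB.mul_mul_conjTranspose_same S).trace_nonneg

theorem PosSemidef.trace_mul_le_trace_mul {A X Y : Matrix m m ℝ} (hA : A.PosSemidef)
    (hXY : (Y - X).PosSemidef) : (A * X).trace ≤ (A * Y).trace := by
  have := hA.trace_mul_nonneg hXY
  rw [Matrix.mul_sub, trace_sub] at this
  linarith

theorem PosDef.posSemidef_inv_sub_inv {P Q : Matrix m m ℝ} (hP : P.PosDef)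
    (hPQ : (Q - P).PosSemidef) : (P⁻¹ - Q⁻¹).PosSemidef := by
  have hQ : Q.PosDef := by simpa using hP.add_posSemidef hPQ
  have hPd : IsUnit P.det := hP.det_pos.ne'.isUnit
  have hQd : IsUnit Q.det := hQ.det_pos.ne'.isUnit
  have key : P⁻¹ - Q⁻¹ = Q⁻¹ * ((Q - P) + (Q - P) * P⁻¹ * (Q - P)) * Q⁻¹ := by
    simp only [Matrix.sub_mul, Matrix.mul_sub, Matrix.mul_assoc, Matrix.add_mul, Matrix.mul_add,
      mul_nonsing_inv _ hPd, mul_nonsing_inv _ hQd, nonsing_inv_mul _ hPd, nonsing_inv_mul _ hQd,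
      Matrix.mul_one, Matrix.one_mul, nonsing_inv_mul_cancel_left _ _ hQd]
    abel
  have hD : ((Q - P) + (Q - P) * P⁻¹ * (Q - P)).PosSemidef := by
    refine hPQ.add ?_
    simpa only [hPQ.isHermitian.eq] using hP.posSemidef.inv.conjTranspose_mul_mul_same (Q - P)
  rw [key]
  simpa only [hQ.isHermitian.inv.eq] using hD.mul_mul_conjTranspose_same Q⁻¹

omit [Fintype m] in
theorem PosSemidef.posDef_add_smul_one {A : Matrix m m ℝ} (hA : A.PosSemidef) {l : ℝ}
    (hl : 0 < l) : (A + l • (1 : Matrix m m ℝ)).PosDef :=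
  PosDef.posSemidef_add hA (PosDef.one.smul hl)

/-- For Hermitian `A` with eigenvalues `μⱼ` this is `∑ⱼ μⱼ / (μⱼ + l)`. -/
noncomputable def effectiveDimension (l : ℝ) (A : Matrix m m ℝ) : ℝ :=
  (A * (A + l • (1 : Matrix m m ℝ))⁻¹).trace

theorem effectiveDimension_eq_card_sub {A : Matrix m m ℝ} {l : ℝ}
    (h : IsUnit (A + l • (1 : Matrix m m ℝ)).det) :
    effectiveDimension l A = Fintype.card m - l * (A + l • (1 : Matrix m m ℝ))⁻¹.trace := by
  have hA : A * (A + l • 1)⁻¹ = 1 - l • (A + l • 1)⁻¹ := by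
    have := mul_nonsing_inv _ h
    rw [Matrix.add_mul, Matrix.smul_mul, Matrix.one_mul] at this
    exact eq_sub_of_add_eq this
  rw [effectiveDimension, hA, trace_sub, trace_one, trace_smul, smul_eq_mul]

theorem effectiveDimension_nonneg {A : Matrix m m ℝ} (hA : A.PosSemidef) {l : ℝ} (hl : 0 ≤ l) :
    0 ≤ effectiveDimension l A :=
  hA.trace_mul_nonneg (hA.add (PosSemidef.one.smul hl)).inv

theorem effectiveDimension_mono {A B : Matrix m m ℝ} (hA : A.PosSemidef)
    (hAB : (B - A).PosSemidef) {l : ℝ} (hl : 0 < l) :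
    effectiveDimension l A ≤ effectiveDimension l B := by
  have hAl := hA.posDef_add_smul_one hl
  have hB : B.PosSemidef := by simpa using hA.add hAB
  have hBl := hB.posDef_add_smul_one hl
  rw [effectiveDimension_eq_card_sub hAl.det_pos.ne'.isUnit,
    effectiveDimension_eq_card_sub hBl.det_pos.ne'.isUnit]
  have hinv := (hAl.posSemidef_inv_sub_inv (Q := B + l • 1) (by simpa using hAB)).trace_nonneg
  rw [trace_sub] at hinv
  nlinarith

theorem effectiveDimension_le_trace_mul_add {A B : Matrix m m ℝ} (hA : A.PosSemidef)
    (hB : B.PosSemidef) {l : ℝ} (hl : 0 < l) :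
    effectiveDimension l A ≤ (A * (B + l • (1 : Matrix m m ℝ))⁻¹).trace + effectiveDimension l B := by
  have hsub : ((B + l • 1)⁻¹ - (A + B + l • 1)⁻¹).PosSemidef :=
    (hB.posDef_add_smul_one hl).posSemidef_inv_sub_inv (by simpa [add_assoc, add_comm B] using hA)
  calc effectiveDimension l A ≤ effectiveDimension l (A + B) :=
        effectiveDimension_mono hA (by simpa using hB) hl
    _ = (A * (A + B + l • 1)⁻¹).trace + (B * (A + B + l • 1)⁻¹).trace := by
        rw [effectiveDimension, Matrix.add_mul, trace_add]
    _ ≤ (A * (B + l • 1)⁻¹).trace + (B * (B + l • 1)⁻¹).trace :=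
        add_le_add (hA.trace_mul_le_trace_mul hsub) (hB.trace_mul_le_trace_mul hsub)

end EffectiveDimension

section EntrywiseIntegral

variable {Ω m n : Type*} [MeasurableSpace Ω] [Fintype m] [Fintype n]

noncomputable def entrywiseIntegral (μ : Measure Ω) (M : Ω → Matrix m n ℝ) : Matrix m n ℝ :=
  of fun j k => ∫ ω, M ω j k ∂μ

variable {μ : Measure Ω}

theorem _root_.LinearMap.apply_matrix_eq_sum_single [DecidableEq m] [DecidableEq n]
    (φ : Matrix m n ℝ →ₗ[ℝ] ℝ) (A : Matrix m n ℝ) :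
    φ A = ∑ j, ∑ k, A j k * φ (single j k 1) := by
  conv_lhs => rw [matrix_eq_sum_single A]
  simp only [map_sum]
  refine Finset.sum_congr rfl fun j _ => Finset.sum_congr rfl fun k _ => ?_
  rw [← smul_eq_mul, ← map_smul, smul_single, smul_eq_mul, mul_one]

theorem integrable_linearMap_apply (φ : Matrix m n ℝ →ₗ[ℝ] ℝ) {M : Ω → Matrix m n ℝ}
    (hM : ∀ j k, Integrable (fun ω => M ω j k) μ) : Integrable (fun ω => φ (M ω)) μ := by
  classical
  rw [show (fun ω => φ (M ω)) = _ from funext fun ω => φ.apply_matrix_eq_sum_single (M ω)]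
  exact integrable_finsetSum _ fun j _ => integrable_finsetSum _ fun k _ => (hM j k).mul_const _

theorem integral_linearMap_apply (φ : Matrix m n ℝ →ₗ[ℝ] ℝ) {M : Ω → Matrix m n ℝ}
    (hM : ∀ j k, Integrable (fun ω => M ω j k) μ) :
    ∫ ω, φ (M ω) ∂μ = φ (entrywiseIntegral μ M) := by
  classical
  rw [show (fun ω => φ (M ω)) = _ from funext fun ω => φ.apply_matrix_eq_sum_single (M ω),
    φ.apply_matrix_eq_sum_single, integral_finsetSum _ fun j _ =>
      integrable_finsetSum _ fun k _ => (hM j k).mul_const _]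
  refine Finset.sum_congr rfl fun j _ => ?_
  rw [integral_finsetSum _ fun k _ => (hM j k).mul_const _]
  simp only [integral_mul_const, entrywiseIntegral, of_apply]

theorem posSemidef_entrywiseIntegral {M : Ω → Matrix m m ℝ}
    (hM : ∀ j k, Integrable (fun ω => M ω j k) μ) (hpsd : ∀ᵐ ω ∂μ, (M ω).PosSemidef) :
    (entrywiseIntegral μ M).PosSemidef := by
  refine PosSemidef.of_dotProduct_mulVec_nonneg ?_ fun v => ?_
  · ext j k
    refine integral_congr_ae ?_
    filter_upwards [hpsd] with ω hω
    simpa using hω.isHermitian.apply j k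
  · let q : Matrix m m ℝ →ₗ[ℝ] ℝ :=
      { toFun := fun A => star v ⬝ᵥ A *ᵥ v
        map_add' := fun A B => by simp [add_mulVec]
        map_smul' := fun c A => by simp [smul_mulVec] }
    change 0 ≤ q _
    rw [← integral_linearMap_apply q hM]
    exact integral_nonneg_of_ae (hpsd.mono fun ω hω => hω.dotProduct_mulVec_nonneg v)

theorem integral_effectiveDimension_le_two_mul [IsProbabilityMeasure μ] [DecidableEq m]
    {M : Ω → Matrix m m ℝ} (hM : ∀ j k, Integrable (fun ω => M ω j k) μ)
    (hpsd : ∀ᵐ ω ∂μ, (M ω).PosSemidef) {l : ℝ} (hl : 0 < l) :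
    ∫ ω, effectiveDimension l (M ω) ∂μ ≤ 2 * effectiveDimension l (entrywiseIntegral μ M) := by
  set C := entrywiseIntegral μ M
  have hC : C.PosSemidef := posSemidef_entrywiseIntegral hM hpsd
  let φ := traceLinearMap m ℝ ℝ ∘ₗ LinearMap.mulRight ℝ (C + l • 1)⁻¹
  calc ∫ ω, effectiveDimension l (M ω) ∂μ ≤ ∫ ω, (φ (M ω) + effectiveDimension l C) ∂μ :=
        integral_mono_of_nonneg (hpsd.mono fun ω hω => effectiveDimension_nonneg hω hl.le)
          ((integrable_linearMap_apply φ hM).add (integrable_const _))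
          (hpsd.mono fun ω hω => effectiveDimension_le_trace_mul_add hω hC hl)
    _ = 2 * effectiveDimension l C := by
        rw [integral_add (integrable_linearMap_apply φ hM) (integrable_const _),
          integral_linearMap_apply φ hM, integral_const, probReal_univ, one_smul]
        simp only [φ, LinearMap.comp_apply, LinearMap.mulRight_apply, traceLinearMap_apply,
          effectiveDimension]
        ring

end EntrywiseIntegral

end Matrix

section EmpiricalSecondMoment

variable {Ω m : Type*} {n : ℕ}

noncomputable def empiricalSecondMoment (x : Fin n → Ω → m → ℝ) (ω : Ω) : Matrix m m ℝ :=
  (n : ℝ)⁻¹ • ∑ i, vecMulVec (x i ω) (x i ω)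

theorem posSemidef_empiricalSecondMoment [Fintype m] (x : Fin n → Ω → m → ℝ) (ω : Ω) :
    (empiricalSecondMoment x ω).PosSemidef :=
  (posSemidef_sum _ fun i _ => by simpa using posSemidef_vecMulVec_self_star (x i ω)).smul
    (by positivity)

theorem integrable_empiricalSecondMoment_apply [MeasurableSpace Ω] {μ : Measure Ω}
    {x : Fin n → Ω → m → ℝ}
    (hx : ∀ i j k, Integrable (fun ω => x i ω j * x i ω k) μ) (j k : m) :
    Integrable (fun ω => empiricalSecondMoment x ω j k) μ := by
  simp only [empiricalSecondMoment, Matrix.smul_apply, Matrix.sum_apply, vecMulVec_apply,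
    smul_eq_mul]
  exact (integrable_finsetSum _ fun i _ => hx i j k).const_mul _

theorem entrywiseIntegral_empiricalSecondMoment [MeasurableSpace Ω] {μ : Measure Ω} [Fintype m]
    (hn : n ≠ 0) {x : Fin n → Ω → m → ℝ}
    (hx : ∀ i j k, Integrable (fun ω => x i ω j * x i ω k) μ) {C : Matrix m m ℝ}
    (hC : ∀ i j k, ∫ ω, x i ω j * x i ω k ∂μ = C j k) :
    entrywiseIntegral μ (empiricalSecondMoment x) = C := by
  ext j k
  simp only [entrywiseIntegral, empiricalSecondMoment, of_apply, Matrix.smul_apply,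
    Matrix.sum_apply, vecMulVec_apply, smul_eq_mul]
  rw [integral_const_mul, integral_finsetSum _ fun i _ => hx i j k]
  simp only [hC, Finset.sum_const, Finset.card_univ, Fintype.card_fin, nsmul_eq_mul]
  field_simp

end EmpiricalSecondMoment

theorem expected_empirical_effective_dimension_le_general
    {d n : ℕ} (hn : 0 < n)
    {Ω : Type*} [MeasurableSpace Ω] (μ : Measure Ω) [IsProbabilityMeasure μ]
    (x : Fin n → Ω → (Fin d → ℝ)) (hmeas : ∀ i, Measurable (x i))
    (R : ℝ) (hbound : ∀ i ω j, |x i ω j| ≤ R)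
    (C : Matrix (Fin d) (Fin d) ℝ)
    (hC : ∀ i j k, ∫ ω, x i ω j * x i ω k ∂μ = C j k)
    (l : ℝ) (hl : 0 < l) :
    ∫ ω, (((n : ℝ)⁻¹ • ∑ i : Fin n, vecMulVec (x i ω) (x i ω)) *
        (((n : ℝ)⁻¹ • ∑ i : Fin n, vecMulVec (x i ω) (x i ω))
          + l • (1 : Matrix (Fin d) (Fin d) ℝ))⁻¹).trace ∂μ
      ≤ 2 * (C * (C + l • (1 : Matrix (Fin d) (Fin d) ℝ))⁻¹).trace := by
  have hcoord : ∀ i j, Integrable (fun ω => x i ω j) μ := fun i j =>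
    .of_bound ((measurable_pi_apply j).comp (hmeas i)).aestronglyMeasurable R
      (ae_of_all _ fun ω => hbound i ω j)
  have hprod : ∀ i j k, Integrable (fun ω => x i ω j * x i ω k) μ := fun i j k =>
    (hcoord i k).bdd_mul (hcoord i j).aestronglyMeasurable (ae_of_all _ fun ω => hbound i ω j)
  rw [← entrywiseIntegral_empiricalSecondMoment hn.ne' hprod hC]
  exact integral_effectiveDimension_le_two_mul (integrable_empiricalSecondMoment_apply hprod)
    (ae_of_all _ (posSemidef_empiricalSecondMoment x)) hl

/-- For i.i.d. bounded random vectors with second-moment matrix `C`, the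
expected effective dimension of the empirical covariance matrix
`Ĉ = (1/n)∑ xᵢxᵢᵀ` is at most twice the effective dimension of `C`, where
`d_λ(M) = tr(M(M+λI)⁻¹)`. -/
theorem expected_empirical_effective_dimension_le
    {d n : ℕ} (hn : 0 < n)
    {Ω : Type*} [MeasurableSpace Ω] (μ : Measure Ω) [IsProbabilityMeasure μ]
    (x : Fin n → Ω → (Fin d → ℝ)) (hmeas : ∀ i, Measurable (x i))
    (hindep : iIndepFun x μ)
    (hident : ∀ i j, IdentDistrib (x i) (x j) μ μ)
    (R : ℝ) (hbound : ∀ i ω j, |x i ω j| ≤ R)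
    (C : Matrix (Fin d) (Fin d) ℝ)
    (hC : ∀ i j k, ∫ ω, x i ω j * x i ω k ∂μ = C j k)
    (l : ℝ) (hl : 0 < l) :
    ∫ ω, (((n : ℝ)⁻¹ • ∑ i : Fin n, vecMulVec (x i ω) (x i ω)) *
        (((n : ℝ)⁻¹ • ∑ i : Fin n, vecMulVec (x i ω) (x i ω))
          + l • (1 : Matrix (Fin d) (Fin d) ℝ))⁻¹).trace ∂μ
      ≤ 2 * (C * (C + l • (1 : Matrix (Fin d) (Fin d) ℝ))⁻¹).trace :=
  expected_empirical_effective_dimension_le_general hn μ x hmeas R hbound C hC l hl
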